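/- arXiv:1011.0997 — 3 statements merged into one kernel-verified Lean document; each statement's English description precedes it below -/
import Mathlib

section
/- Let A and à be real symmetric N×N matrices with eigenvalues λ_1 ≥ λ_2 ≥ … ≥ λ_N and λ̃_1 ≥ λ̃_2 ≥ … ≥ λ̃_N respectively, and let V_k ∈ ℝ^{N×k} and Ṽ_k ∈ ℝ^{N×k} have orthonormal columns that are eigenvectors of A and à corresponding to λ_1,…,λ_k and λ̃_1,…,λ̃_k. For each i ∈ {1,…,N} let v(i) and ṽ(i) denote the i-th rows of V_k and Ṽ_k. If there is α > 0 such that λ_k − λ_{k+1} ≥ α and λ_k ≥ α, then there exists an orthogonal matrix Q ∈ ℝ^{k×k} such that for every i ∈ {1,…,N}, ‖ṽ(i) − v(i) Q‖_2 ≤ (1 + √2)·(1/α)·‖A − Ã‖_F. -/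
/-!
Write `E = A − Ã`, `M = Vᵀ Ṽ` and `Λ̃ = diag (λ̃₁, …, λ̃ₖ)`, all norms being Frobenius. Since `A`
commutes with `V Vᵀ`, the residual `Z = Ṽ − V M` satisfies `A Z − Z Λ̃ = (1 − V Vᵀ) E Ṽ`. Its
columns are orthogonal to the top `k` eigenvectors of `A`, which by a dimension count span every
eigenvector with eigenvalue `> λ_{k+1}`; hence `d₁ ‖Z‖ ≤ ‖(1 − V Vᵀ) E Ṽ‖` when
`d₁ = λ̃_k − λ_{k+1} ≥ 0`. Exchanging the roles of `A` and `Ã` gives the same kind of bound with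
`d₂ = λ_k − λ̃_{k+1}`, and both residuals have squared norm `k − ‖M‖²`. The two right-hand sides
have squares summing to at most `‖E‖²`, and `d₁ + d₂ ≥ α`, so `α² ‖Z‖² ≤ 2 ‖E‖²`. Finally, if `Q`
is the polar factor of `M`, then `‖Ṽ − V Q‖² = 2 (k − tr √(MᵀM)) ≤ 2 (k − tr (MᵀM)) = 2 ‖Z‖²`,
so every row of `Ṽ − V Q` is at most `(2 / α) ‖E‖ ≤ ((1 + √2) / α) ‖E‖`.
-/

open Matrix

noncomputable def frobNorm {m n : ℕ} (M : Matrix (Fin m) (Fin n) ℝ) : ℝ :=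
  Real.sqrt (∑ i, ∑ j, (M i j) ^ 2)

noncomputable def eucNorm {d : ℕ} (v : Fin d → ℝ) : ℝ :=
  Real.sqrt (∑ j, v j ^ 2)

section CommRing

variable {R : Type*} [CommRing R] {m n : Type*} [Fintype n]

lemma mulVec_dotProduct_mulVec [Fintype m] (A : Matrix m n R) (x y : n → R) :
    (A *ᵥ x) ⬝ᵥ (A *ᵥ y) = x ⬝ᵥ ((Aᵀ * A) *ᵥ y) := by
  rw [dotProduct_comm, dotProduct_mulVec, ← mulVec_transpose, dotProduct_comm, mulVec_mulVec]

lemma transpose_mul_diagonal_mul_transpose [DecidableEq n] (U : Matrix m n R) (ν : n → R) :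
    (U * diagonal ν * Uᵀ)ᵀ = U * diagonal ν * Uᵀ := by
  simp only [transpose_mul, transpose_transpose, diagonal_transpose, Matrix.mul_assoc]

lemma mul_eq_mul_diagonal_of_mulVec_col [DecidableEq n] {A : Matrix m m R} [Fintype m]
    {V : Matrix m n R} {ν : n → R} (hV : ∀ j, A *ᵥ (fun i => V i j) = ν j • fun i => V i j) :
    A * V = V * diagonal ν := by
  ext i j
  simpa [mul_apply, mulVec, dotProduct, mul_comm, diagonal_apply] using congrFun (hV j) i

lemma mul_mul_transpose_comm_of_mul_eq [Fintype m] {A : Matrix m m R} (hA : Aᵀ = A)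
    {V : Matrix m n R} {D : Matrix n n R} (hD : Dᵀ = D) (hAV : A * V = V * D) :
    A * (V * Vᵀ) = V * Vᵀ * A := by
  have hVA : Vᵀ * A = D * Vᵀ := by
    rw [← hA, ← transpose_mul, hAV, transpose_mul, hD]
  rw [← Matrix.mul_assoc, hAV, Matrix.mul_assoc, Matrix.mul_assoc, hVA]

lemma transpose_mul_self_sub_proj [Fintype m] {l : Type*} [DecidableEq n] {V : Matrix m n R}
    (hV : Vᵀ * V = 1) (X : Matrix m l R) :
    (X - V * (Vᵀ * X))ᵀ * (X - V * (Vᵀ * X)) = Xᵀ * X - (Vᵀ * X)ᵀ * (Vᵀ * X) := by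
  have hVVX : Vᵀ * (V * (Vᵀ * X)) = Vᵀ * X := by rw [← Matrix.mul_assoc, hV, Matrix.one_mul]
  simp only [transpose_sub, transpose_mul, transpose_transpose, Matrix.sub_mul, Matrix.mul_sub,
    Matrix.mul_assoc, hVVX]
  abel

end CommRing

noncomputable def frobSq {m n : Type*} [Fintype m] [Fintype n] (M : Matrix m n ℝ) : ℝ :=
  ∑ i, ∑ j, M i j ^ 2

section Frobenius

variable {l m n : Type*} [Fintype l] [Fintype m] [Fintype n]

lemma frobSq_nonneg (M : Matrix m n ℝ) : 0 ≤ frobSq M := by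
  unfold frobSq; positivity

lemma frobSq_transpose (M : Matrix m n ℝ) : frobSq Mᵀ = frobSq M :=
  Finset.sum_comm

lemma frobSq_neg (M : Matrix m n ℝ) : frobSq (-M) = frobSq M := by
  simp [frobSq]

lemma frobSq_eq_trace (M : Matrix m n ℝ) : frobSq M = (Mᵀ * M).trace := by
  rw [← frobSq_transpose]
  simp [frobSq, trace, mul_apply, sq]

lemma frobSq_eq_sum_dotProduct_col (M : Matrix m n ℝ) : frobSq M = ∑ j, Mᵀ j ⬝ᵥ Mᵀ j := by
  rw [← frobSq_transpose]
  simp [frobSq, dotProduct, sq]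

lemma sum_sq_row_le_frobSq (M : Matrix m n ℝ) (i : m) : ∑ j, M i j ^ 2 ≤ frobSq M :=
  Finset.single_le_sum (f := fun i => ∑ j, M i j ^ 2) (fun _ _ => by positivity)
    (Finset.mem_univ i)

variable [DecidableEq n] {V W : Matrix m n ℝ}

lemma frobSq_eq_add_proj (hV : Vᵀ * V = 1) (X : Matrix m l ℝ) :
    frobSq X = frobSq (Vᵀ * X) + frobSq (X - V * (Vᵀ * X)) := by
  rw [frobSq_eq_trace, frobSq_eq_trace, frobSq_eq_trace, transpose_mul_self_sub_proj hV,
    trace_sub]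
  ring

lemma frobSq_transpose_mul_le (hV : Vᵀ * V = 1) (X : Matrix m l ℝ) :
    frobSq (Vᵀ * X) ≤ frobSq X := by
  linarith [frobSq_eq_add_proj hV X, frobSq_nonneg (X - V * (Vᵀ * X))]

lemma frobSq_sub_proj_le (hV : Vᵀ * V = 1) (X : Matrix m l ℝ) :
    frobSq (X - V * (Vᵀ * X)) ≤ frobSq X := by
  linarith [frobSq_eq_add_proj hV X, frobSq_nonneg (Vᵀ * X)]

lemma frobSq_mul_le (hV : Vᵀ * V = 1) (X : Matrix l m ℝ) : frobSq (X * V) ≤ frobSq X := by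
  rw [← frobSq_transpose, transpose_mul, ← frobSq_transpose X]
  exact frobSq_transpose_mul_le hV Xᵀ

lemma frobSq_sub_proj_of_orthonormal (hV : Vᵀ * V = 1) (hW : Wᵀ * W = 1) :
    frobSq (W - V * (Vᵀ * W)) = Fintype.card n - frobSq (Vᵀ * W) := by
  rw [frobSq_eq_trace, frobSq_eq_trace, transpose_mul_self_sub_proj hV, hW, trace_sub, trace_one]

lemma frobSq_sub_mul_of_orthonormal (hV : Vᵀ * V = 1) (hW : Wᵀ * W = 1)
    {Q : Matrix n n ℝ} (hQ : Qᵀ * Q = 1) :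
    frobSq (W - V * Q) = 2 * (Fintype.card n - (Qᵀ * (Vᵀ * W)).trace) := by
  have hgram : (W - V * Q)ᵀ * (W - V * Q) = 2 - (Qᵀ * (Vᵀ * W))ᵀ - Qᵀ * (Vᵀ * W) := by
    simp only [transpose_sub, transpose_mul, transpose_transpose, Matrix.sub_mul, Matrix.mul_sub,
      hW, Matrix.mul_assoc]
    rw [← Matrix.mul_assoc Vᵀ, hV, Matrix.one_mul, hQ, one_add_one_eq_two.symm]
    abel
  rw [frobSq_eq_trace, hgram, trace_sub, trace_sub, trace_transpose, ← one_add_one_eq_two,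
    trace_add, trace_one]
  ring

lemma frobSq_sub_proj_add_frobSq_sub_proj_le {E : Matrix m m ℝ} (hE : Eᵀ = E)
    (hV : Vᵀ * V = 1) (hW : Wᵀ * W = 1) :
    frobSq (E * W - V * (Vᵀ * (E * W))) + frobSq (E * V - W * (Wᵀ * (E * V))) ≤ frobSq E := by
  have h₁ : frobSq (E * W - V * (Vᵀ * (E * W))) ≤ frobSq (E - V * (Vᵀ * E)) := by
    rw [show E * W - V * (Vᵀ * (E * W)) = (E - V * (Vᵀ * E)) * W by
      simp only [Matrix.sub_mul, Matrix.mul_assoc]]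
    exact frobSq_mul_le hW _
  have h₂ : frobSq (E * V - W * (Wᵀ * (E * V))) ≤ frobSq (Vᵀ * E) :=
    calc _ ≤ frobSq (E * V) := frobSq_sub_proj_le hW _
      _ = frobSq (Vᵀ * E) := by rw [← frobSq_transpose, transpose_mul, hE]
  linarith [frobSq_eq_add_proj hV E]

end Frobenius

section SpectralGap

variable {ι κ : Type*} [Fintype ι] [Fintype κ] [DecidableEq κ]

/-- The columns in `K` are `|S|` orthonormal vectors supported on `S`, hence span every vector
supported on `S`. -/
lemma apply_eq_zero_of_transpose_mulVec_eq_zero {T : Matrix ι κ ℝ} (hT : Tᵀ * T = 1)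
    {S : Set ι} {K : Set κ} (e : S ≃ K) (hsupp : ∀ i ∉ S, ∀ j ∈ K, T i j = 0)
    {ζ : ι → ℝ} (hζ : Tᵀ *ᵥ ζ = 0) {i : ι} (hi : i ∈ S) : ζ i = 0 := by
  classical
  let C : Matrix S K ℝ := T.submatrix (↑) (↑)
  have hsum : ∀ j ∈ K, ∀ f : ι → ℝ, ∑ a : S, T a j * f a = ∑ a, T a j * f a := by
    intro j hj f
    rw [Finset.sum_set_coe (f := fun a => T a j * f a)]
    exact Finset.sum_subset (Finset.subset_univ _) fun a _ ha => by
      rw [hsupp a (by simpa using ha) j hj, zero_mul]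
  have hCC : Cᵀ * C = 1 := by
    ext j j'
    have := congrFun (congrFun hT j) j'
    simp only [mul_apply, transpose_apply, ← hsum j j.2] at this
    simpa [C, mul_apply, one_apply, Subtype.ext_iff] using this
  have hCCt : C * Cᵀ = 1 := (mul_eq_one_comm_of_equiv e.symm).mp hCC
  have hCζ : Cᵀ *ᵥ (fun a : S => ζ a) = 0 := by
    ext j
    simpa [mulVec, dotProduct, C, hsum j j.2] using congrFun hζ j
  have hζS : (fun a : S => ζ a) = 0 := by
    rw [← one_mulVec (fun a : S => ζ a), ← hCCt, ← mulVec_mulVec, hCζ, mulVec_zero]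
  exact congrFun hζS ⟨i, hi⟩

variable [DecidableEq ι] {ν : ι → ℝ} {ν' : κ → ℝ} {c d μ : ℝ}

lemma sq_mul_dotProduct_le_of_diagonal {T : Matrix ι κ ℝ} (hT : Tᵀ * T = 1)
    (hTν : diagonal ν * T = T * diagonal ν') (e : {i // c < ν i} ≃ {j // c < ν' j})
    {ζ : ι → ℝ} (hζ : Tᵀ *ᵥ ζ = 0) (hd : 0 ≤ d) (hμ : c + d ≤ μ) :
    d ^ 2 * (ζ ⬝ᵥ ζ) ≤ (diagonal ν *ᵥ ζ - μ • ζ) ⬝ᵥ (diagonal ν *ᵥ ζ - μ • ζ) := by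
  have hsupp : ∀ i ∉ {i | c < ν i}, ∀ j ∈ {j | c < ν' j}, T i j = 0 := by
    intro i hi j hj
    have hij := congrFun (congrFun hTν i) j
    simp only [diagonal_mul, mul_diagonal] at hij
    have hne : ν i ≠ ν' j := by simp only [Set.mem_ofPred_eq] at hi hj; linarith
    by_contra hT0
    exact hne (mul_right_cancel₀ hT0 (hij.trans (mul_comm _ _)))
  have hvan := fun i => apply_eq_zero_of_transpose_mulVec_eq_zero hT e hsupp hζ (i := i)
  simp only [dotProduct, Finset.mul_sum, mulVec_diagonal, Pi.sub_apply, Pi.smul_apply,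
    smul_eq_mul]
  refine Finset.sum_le_sum fun i _ => ?_
  by_cases hi : c < ν i
  · simp [hvan i hi]
  · have hgap : d ^ 2 ≤ (μ - ν i) ^ 2 := pow_le_pow_left₀ hd (by linarith) 2
    calc d ^ 2 * (ζ i * ζ i) ≤ (μ - ν i) ^ 2 * (ζ i * ζ i) :=
          mul_le_mul_of_nonneg_right hgap (mul_self_nonneg _)
      _ = _ := by ring

lemma sq_mul_dotProduct_le_of_eigen {U B : Matrix ι ι ℝ} (hU : U * Uᵀ = 1)
    (hB : B = U * diagonal ν * Uᵀ) {W : Matrix ι κ ℝ} (hW : Wᵀ * W = 1)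
    (hBW : B * W = W * diagonal ν') (e : {i // c < ν i} ≃ {j // c < ν' j}) {z : ι → ℝ}
    (hz : Wᵀ *ᵥ z = 0) (hd : 0 ≤ d) (hμ : c + d ≤ μ) :
    d ^ 2 * (z ⬝ᵥ z) ≤ (B *ᵥ z - μ • z) ⬝ᵥ (B *ᵥ z - μ • z) := by
  have hUB : Uᵀ * B = diagonal ν * Uᵀ := by
    rw [hB, ← Matrix.mul_assoc, ← Matrix.mul_assoc, mul_eq_one_comm.mp hU, Matrix.one_mul]
  have hUU : (Uᵀ)ᵀ * Uᵀ = 1 := by rw [transpose_transpose, hU]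
  have hnorm : ∀ x, (Uᵀ *ᵥ x) ⬝ᵥ (Uᵀ *ᵥ x) = x ⬝ᵥ x := fun x => by
    rw [mulVec_dotProduct_mulVec, hUU, one_mulVec]
  have hres : diagonal ν *ᵥ (Uᵀ *ᵥ z) - μ • (Uᵀ *ᵥ z) = Uᵀ *ᵥ (B *ᵥ z - μ • z) := by
    rw [mulVec_sub, mulVec_smul, mulVec_mulVec, mulVec_mulVec, hUB]
  have key := sq_mul_dotProduct_le_of_diagonal (T := Uᵀ * W) (ζ := Uᵀ *ᵥ z)
    (by rw [transpose_mul, Matrix.mul_assoc, ← Matrix.mul_assoc _ Uᵀ, hUU, Matrix.one_mul, hW])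
    (by rw [← Matrix.mul_assoc, ← hUB, Matrix.mul_assoc, hBW, Matrix.mul_assoc]) e
    (by rw [mulVec_mulVec, transpose_mul, Matrix.mul_assoc, hUU, Matrix.mul_one, hz]) hd hμ
  rwa [hres, hnorm, hnorm] at key

lemma sq_mul_frobSq_le_of_eigen {U B : Matrix ι ι ℝ} (hU : U * Uᵀ = 1)
    (hB : B = U * diagonal ν * Uᵀ) {W : Matrix ι κ ℝ} (hW : Wᵀ * W = 1)
    (hBW : B * W = W * diagonal ν') (e : {i // c < ν i} ≃ {j // c < ν' j})
    {p : Type*} [Fintype p] [DecidableEq p] {Z : Matrix ι p ℝ} (hZ : Wᵀ * Z = 0) {θ : p → ℝ}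
    (hd : 0 ≤ d) (hθ : ∀ j, c + d ≤ θ j) :
    d ^ 2 * frobSq Z ≤ frobSq (B * Z - Z * diagonal θ) := by
  rw [frobSq_eq_sum_dotProduct_col, frobSq_eq_sum_dotProduct_col, Finset.mul_sum]
  refine Finset.sum_le_sum fun j _ => ?_
  have hcol : (B * Z - Z * diagonal θ)ᵀ j = B *ᵥ Zᵀ j - θ j • Zᵀ j := by
    ext i
    rw [transpose_apply, Matrix.sub_apply, mul_diagonal]
    simp [mul_apply, mulVec, dotProduct, mul_comm]
  have hZj : Wᵀ *ᵥ Zᵀ j = 0 := by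
    ext i
    simpa [mulVec, dotProduct, mul_apply] using congrFun (congrFun hZ i) j
  rw [hcol]
  exact sq_mul_dotProduct_le_of_eigen hU hB hW hBW e hZj hd (hθ j)

end SpectralGap

section Procrustes

variable {n : Type*} [Fintype n] [DecidableEq n]

lemma exists_orthogonal_trace_mul_eq_sum_sqrt {N : Matrix n n ℝ} (hN : (Nᵀ * N).IsDiag) :
    ∃ Q : Matrix n n ℝ, Qᵀ * Q = 1 ∧ (Qᵀ * N).trace = ∑ j, √((Nᵀ * N) j j) := by
  let f : n → EuclideanSpace ℝ n := fun j => WithLp.toLp 2 (Nᵀ j)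
  have hinner : ∀ i j, inner ℝ (f i) (f j) = (Nᵀ * N) i j := fun i j => by
    simp [f, PiLp.inner_apply, mul_apply, mul_comm]
  have hf : Pairwise fun i j => inner ℝ (f i) (f j) = 0 := fun i j hij =>
    (hinner i j).trans (hN hij)
  let v : n → EuclideanSpace ℝ n := fun j => ‖f j‖⁻¹ • f j
  have hv : Orthonormal ℝ ({j | f j ≠ 0}.domRestrict v) :=
    ⟨fun j => norm_smul_inv_norm (𝕜 := ℝ) j.2, fun i j hij => by
      simp [v, real_inner_smul_left, real_inner_smul_right, hf (Subtype.coe_ne_coe.mpr hij)]⟩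
  obtain ⟨b, hbv⟩ := hv.exists_orthonormalBasis_extension_of_card_eq finrank_euclideanSpace
  have hb : ∀ j, inner ℝ (b j) (f j) = ‖f j‖ := fun j => by
    by_cases hj : f j = 0
    · simp [hj]
    · rw [hbv j hj, real_inner_smul_left, real_inner_self_eq_norm_sq]
      field_simp
  refine ⟨(EuclideanSpace.basisFun n ℝ).toBasis.toMatrix b.toBasis, ?_, ?_⟩
  · simpa using (EuclideanSpace.basisFun n ℝ).toMatrix_orthonormalBasis_conjTranspose_mul_self b
  · refine Finset.sum_congr rfl fun j _ => ?_
    rw [← hinner, ← norm_eq_sqrt_real_inner, ← hb]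
    simp [f, PiLp.inner_apply, mul_apply, Module.Basis.toMatrix_apply, mul_comm]

/-- `Q` is the polar factor of `M`: then `tr (Qᵀ M) = tr √(Mᵀ M)`, which dominates `tr (Mᵀ M)`
because the eigenvalues of `Mᵀ M` lie in `[0, 1]`. -/
lemma exists_orthogonal_trace_ge {M : Matrix n n ℝ} (hM : (1 - Mᵀ * M).PosSemidef) :
    ∃ Q : Matrix n n ℝ, Qᵀ * Q = 1 ∧ (Mᵀ * M).trace ≤ (Qᵀ * M).trace := by
  have hH : (Mᵀ * M).IsHermitian := by
    simpa [conjTranspose_eq_transpose_of_trivial] using isHermitian_conjTranspose_mul_self M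
  set R : Matrix n n ℝ := (hH.eigenvectorUnitary : Matrix n n ℝ)
  have hR : Rᵀ * R = 1 := by
    simpa [R, star_eq_conjTranspose, conjTranspose_eq_transpose_of_trivial] using
      Unitary.coe_star_mul_self hH.eigenvectorUnitary
  have hG : (M * R)ᵀ * (M * R) = Rᵀ * (Mᵀ * M) * R := by
    simp only [transpose_mul, Matrix.mul_assoc]
  have hdiag : ((M * R)ᵀ * (M * R)).IsDiag := by
    have hconj := hH.conjStarAlgAut_star_eigenvectorUnitary
    rw [Unitary.conjStarAlgAut_star_apply] at hconj
    simp only [star_eq_conjTranspose, conjTranspose_eq_transpose_of_trivial] at hconj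
    rw [hG, hconj]
    exact isDiag_diagonal _
  have hle : ∀ j, ((M * R)ᵀ * (M * R)) j j ≤ 1 := fun j => by
    have := (hM.conjTranspose_mul_mul_same R).diag_nonneg (i := j)
    rwa [conjTranspose_eq_transpose_of_trivial, Matrix.mul_sub, Matrix.sub_mul, Matrix.mul_one,
      hR, ← hG, Matrix.sub_apply, one_apply_eq, sub_nonneg] at this
  obtain ⟨Q₀, hQ₀, htr⟩ := exists_orthogonal_trace_mul_eq_sum_sqrt hdiag
  refine ⟨Q₀ * Rᵀ, ?_, ?_⟩
  · rw [transpose_mul, transpose_transpose, Matrix.mul_assoc, ← Matrix.mul_assoc Q₀ᵀ, hQ₀,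
      Matrix.one_mul, mul_eq_one_comm.mp hR]
  · have htrG : (Mᵀ * M).trace = ((M * R)ᵀ * (M * R)).trace := by
      rw [hG, trace_mul_comm (Rᵀ * (Mᵀ * M)), ← Matrix.mul_assoc, mul_eq_one_comm.mp hR,
        Matrix.one_mul]
    have htrQ : ((Q₀ * Rᵀ)ᵀ * M).trace = (Q₀ᵀ * (M * R)).trace := by
      rw [transpose_mul, transpose_transpose, Matrix.mul_assoc, trace_mul_comm, Matrix.mul_assoc]
    rw [htrG, htrQ, htr]
    refine Finset.sum_le_sum fun j _ => ?_
    have h0 : 0 ≤ ((M * R)ᵀ * (M * R)) j j := by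
      simpa [conjTranspose_eq_transpose_of_trivial] using
        (posSemidef_conjTranspose_mul_self (M * R)).diag_nonneg (i := j)
    exact Real.le_sqrt_of_sq_le (by rw [diag_apply]; nlinarith [hle j])

lemma exists_orthogonal_frobSq_sub_mul_le {m : Type*} [Fintype m] {V W : Matrix m n ℝ}
    (hV : Vᵀ * V = 1) (hW : Wᵀ * W = 1) :
    ∃ Q : Matrix n n ℝ, Qᵀ * Q = 1 ∧
      frobSq (W - V * Q) ≤ 2 * (Fintype.card n - frobSq (Vᵀ * W)) := by
  have hPSD : (1 - (Vᵀ * W)ᵀ * (Vᵀ * W)).PosSemidef := by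
    rw [← hW, ← transpose_mul_self_sub_proj hV]
    simpa only [conjTranspose_eq_transpose_of_trivial] using
      posSemidef_conjTranspose_mul_self (W - V * (Vᵀ * W))
  obtain ⟨Q, hQ, htr⟩ := exists_orthogonal_trace_ge hPSD
  refine ⟨Q, hQ, ?_⟩
  rw [frobSq_sub_mul_of_orthonormal hV hW hQ, frobSq_eq_trace (Vᵀ * W)]
  linarith

end Procrustes

noncomputable def superlevelEquivCastLE {N k : ℕ} (hkN : k < N) {ν : Fin N → ℝ}
    (hν : Antitone ν) :
    {i // ν ⟨k, hkN⟩ < ν i} ≃ {j : Fin k // ν ⟨k, hkN⟩ < ν (Fin.castLE hkN.le j)} :=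
  .symm <| .ofBijective (fun j => ⟨Fin.castLE hkN.le j.1, j.2⟩) <| by
    refine ⟨fun j j' h => Subtype.ext (Fin.castLE_injective hkN.le (Subtype.mk.inj h)), ?_⟩
    rintro ⟨i, hi⟩
    have hik : i.1 < k := by
      by_contra! h
      exact (hν (show (⟨k, hkN⟩ : Fin N) ≤ i from h)).not_gt hi
    exact ⟨⟨⟨i, hik⟩, hi⟩, rfl⟩

lemma apply_pred_le_apply_castLE {N k : ℕ} (hkN : k < N) {f : Fin N → ℝ} (hf : Antitone f)
    (j : Fin k) : f ⟨k - 1, lt_of_le_of_lt (Nat.sub_le k 1) hkN⟩ ≤ f (Fin.castLE hkN.le j) :=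
  hf (Fin.le_def.mpr (by rw [Fin.val_castLE]; exact Nat.le_sub_one_of_lt j.isLt))

lemma sq_mul_frobSq_sub_proj_le {N k : ℕ} (hkN : k < N) {A B U : Matrix (Fin N) (Fin N) ℝ}
    {ν : Fin N → ℝ} (hν : Antitone ν) (hU : U * Uᵀ = 1) (hA : A = U * diagonal ν * Uᵀ)
    {V W : Matrix (Fin N) (Fin k) ℝ} (hV : Vᵀ * V = 1)
    (hAV : A * V = V * diagonal (fun j => ν (Fin.castLE hkN.le j))) {θ : Fin k → ℝ}
    (hBW : B * W = W * diagonal θ) {d : ℝ} (hd : 0 ≤ d) (hθ : ∀ j, ν ⟨k, hkN⟩ + d ≤ θ j) :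
    d ^ 2 * frobSq (W - V * (Vᵀ * W)) ≤ frobSq ((A - B) * W - V * (Vᵀ * ((A - B) * W))) := by
  have hAsymm : Aᵀ = A := by rw [hA, transpose_mul_diagonal_mul_transpose]
  have hcomm : A * (V * (Vᵀ * W)) = V * (Vᵀ * (A * W)) := by
    simp only [← Matrix.mul_assoc]
    rw [Matrix.mul_assoc A V, mul_mul_transpose_comm_of_mul_eq hAsymm (diagonal_transpose _) hAV]
  have hVZ : Vᵀ * (W - V * (Vᵀ * W)) = 0 := by
    rw [Matrix.mul_sub, ← Matrix.mul_assoc Vᵀ V, hV, Matrix.one_mul, sub_self]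
  have hres : A * (W - V * (Vᵀ * W)) - (W - V * (Vᵀ * W)) * diagonal θ
      = (A - B) * W - V * (Vᵀ * ((A - B) * W)) := by
    simp only [Matrix.mul_sub, Matrix.sub_mul, hcomm, Matrix.mul_assoc, ← hBW]
    abel
  rw [← hres]
  exact sq_mul_frobSq_le_of_eigen hU hA hV hAV (superlevelEquivCastLE hkN hν) hVZ hd hθ

lemma sq_mul_le_two_mul_add {α d₁ d₂ x y₁ y₂ : ℝ} (hα : 0 ≤ α) (hsum : α ≤ d₁ + d₂)
    (hx : 0 ≤ x) (hy₁ : 0 ≤ y₁) (hy₂ : 0 ≤ y₂) (h₁ : 0 ≤ d₁ → d₁ ^ 2 * x ≤ y₁)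
    (h₂ : 0 ≤ d₂ → d₂ ^ 2 * x ≤ y₂) : α ^ 2 * x ≤ 2 * (y₁ + y₂) := by
  rcases lt_or_ge d₁ 0 with hd₁ | hd₁
  · have := h₂ (by linarith)
    nlinarith [mul_le_mul_of_nonneg_right (pow_le_pow_left₀ hα (by linarith : α ≤ d₂) 2) hx]
  rcases lt_or_ge d₂ 0 with hd₂ | hd₂
  · have := h₁ hd₁
    nlinarith [mul_le_mul_of_nonneg_right (pow_le_pow_left₀ hα (by linarith : α ≤ d₁) 2) hx]
  have hsq : α ^ 2 ≤ 2 * (d₁ ^ 2 + d₂ ^ 2) := by nlinarith [sq_nonneg (d₁ - d₂)]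
  nlinarith [h₁ hd₁, h₂ hd₂, mul_le_mul_of_nonneg_right hsq hx]

lemma sqrt_le_div_mul_sqrt {α a b : ℝ} (hα : 0 < α) (h : α ^ 2 * a ≤ 4 * b) :
    √a ≤ 2 / α * √b := by
  rw [← Real.sqrt_sq (by positivity : 0 ≤ 2 / α), ← Real.sqrt_mul (by positivity)]
  refine Real.sqrt_le_sqrt ?_
  rw [div_pow, div_mul_eq_mul_div, le_div_iff₀ (by positivity)]
  linarith

lemma frobNorm_eq_sqrt_frobSq {m n : ℕ} (M : Matrix (Fin m) (Fin n) ℝ) :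
    frobNorm M = √(frobSq M) :=
  rfl

lemma eucNorm_le_sqrt_frobSq {m n : ℕ} (M : Matrix (Fin m) (Fin n) ℝ) (i : Fin m) :
    eucNorm (M i) ≤ √(frobSq M) :=
  Real.sqrt_le_sqrt (sum_sq_row_le_frobSq M i)

lemma sq_mul_sub_frobSq_transpose_mul_le {N k : ℕ} (hkN : k < N)
    {A B U U' : Matrix (Fin N) (Fin N) ℝ} {ν ν' : Fin N → ℝ} (hν : Antitone ν)
    (hν' : Antitone ν') (hU : U * Uᵀ = 1) (hU' : U' * U'ᵀ = 1) (hA : A = U * diagonal ν * Uᵀ)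
    (hB : B = U' * diagonal ν' * U'ᵀ) {V W : Matrix (Fin N) (Fin k) ℝ} (hV : Vᵀ * V = 1)
    (hW : Wᵀ * W = 1) (hAV : A * V = V * diagonal (fun j => ν (Fin.castLE hkN.le j)))
    (hBW : B * W = W * diagonal (fun j => ν' (Fin.castLE hkN.le j))) {α : ℝ} (hα : 0 ≤ α)
    (hgap : α ≤ ν ⟨k - 1, lt_of_le_of_lt (Nat.sub_le k 1) hkN⟩ - ν ⟨k, hkN⟩) :
    α ^ 2 * (k - frobSq (Vᵀ * W)) ≤ 2 * frobSq (A - B) := by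
  have hE : (A - B)ᵀ = A - B := by
    rw [transpose_sub, hA, hB, transpose_mul_diagonal_mul_transpose,
      transpose_mul_diagonal_mul_transpose]
  have hx : frobSq (W - V * (Vᵀ * W)) = k - frobSq (Vᵀ * W) := by
    rw [frobSq_sub_proj_of_orthonormal hV hW, Fintype.card_fin]
  have hx' : frobSq (V - W * (Wᵀ * V)) = k - frobSq (Vᵀ * W) := by
    rw [frobSq_sub_proj_of_orthonormal hW hV, Fintype.card_fin, ← frobSq_transpose (Vᵀ * W),
      transpose_mul, transpose_transpose]
  have hneg : (B - A) * V - W * (Wᵀ * ((B - A) * V))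
      = -((A - B) * V - W * (Wᵀ * ((A - B) * V))) := by
    rw [← neg_sub A B, Matrix.neg_mul, Matrix.mul_neg, Matrix.mul_neg, neg_sub_neg, neg_sub]
  have h₁ := fun hd => sq_mul_frobSq_sub_proj_le hkN hν hU hA hV hAV hBW hd
    (d := ν' ⟨k - 1, _⟩ - ν ⟨k, hkN⟩) fun j => by linarith [apply_pred_le_apply_castLE hkN hν' j]
  have h₂ := fun hd => sq_mul_frobSq_sub_proj_le hkN hν' hU' hB hW hBW hAV hd
    (d := ν ⟨k - 1, _⟩ - ν' ⟨k, hkN⟩) fun j => by linarith [apply_pred_le_apply_castLE hkN hν j]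
  rw [hx] at h₁
  rw [hx', hneg, frobSq_neg] at h₂
  have hν'k : ν' ⟨k, hkN⟩ ≤ ν' ⟨k - 1, by omega⟩ := hν' (Fin.mk_le_mk.mpr (Nat.sub_le k 1))
  refine (sq_mul_le_two_mul_add hα (by linarith) (hx ▸ frobSq_nonneg _) (frobSq_nonneg _)
    (frobSq_nonneg _) h₁ h₂).trans ?_
  linarith [frobSq_sub_proj_add_frobSq_sub_proj_le hE hV hW]

theorem spectral_coordinates_perturbation_bound_general {N k : ℕ} (hkN : k < N)
    (A Atil U Util : Matrix (Fin N) (Fin N) ℝ)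
    (lam tlam : Fin N → ℝ) (hlam : Antitone lam) (htlam : Antitone tlam)
    (hUorth : U * Uᵀ = 1) (hUtilorth : Util * Utilᵀ = 1)
    (hAdiag : A = U * Matrix.diagonal lam * Uᵀ)
    (hAtildiag : Atil = Util * Matrix.diagonal tlam * Utilᵀ)
    (Vk Vtilk : Matrix (Fin N) (Fin k) ℝ)
    (hVk : Vkᵀ * Vk = 1) (hVtilk : Vtilkᵀ * Vtilk = 1)
    (hVkcols : ∀ j : Fin k,
      A.mulVec (fun i => Vk i j) = lam (Fin.castLE hkN.le j) • (fun i => Vk i j))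
    (hVtilkcols : ∀ j : Fin k,
      Atil.mulVec (fun i => Vtilk i j) = tlam (Fin.castLE hkN.le j) • (fun i => Vtilk i j))
    (α : ℝ) (hα : 0 < α)
    (hgap : α ≤ lam ⟨k - 1, lt_of_le_of_lt (Nat.sub_le k 1) hkN⟩ - lam ⟨k, hkN⟩) :
    ∃ Q : Matrix (Fin k) (Fin k) ℝ, Qᵀ * Q = 1 ∧
      ∀ i : Fin N,
        eucNorm (fun j => Vtilk i j - Matrix.vecMul (fun l => Vk i l) Q j) ≤
          (1 + Real.sqrt 2) * (1 / α) * frobNorm (A - Atil) := by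
  have hsin := sq_mul_sub_frobSq_transpose_mul_le hkN hlam htlam hUorth hUtilorth hAdiag
    hAtildiag hVk hVtilk (mul_eq_mul_diagonal_of_mulVec_col hVkcols)
    (mul_eq_mul_diagonal_of_mulVec_col hVtilkcols) hα.le hgap
  obtain ⟨Q, hQ, hD⟩ := exists_orthogonal_frobSq_sub_mul_le hVk hVtilk
  rw [Fintype.card_fin] at hD
  refine ⟨Q, hQ, fun i => ?_⟩
  have hrow : (fun j => Vtilk i j - vecMul (fun l => Vk i l) Q j) = (Vtilk - Vk * Q) i := by
    ext j
    simp [vecMul, dotProduct, mul_apply]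
  calc eucNorm _ ≤ √(frobSq (Vtilk - Vk * Q)) := hrow ▸ eucNorm_le_sqrt_frobSq _ i
    _ ≤ 2 / α * √(frobSq (A - Atil)) := sqrt_le_div_mul_sqrt hα (by nlinarith)
    _ ≤ (1 + √2) * (1 / α) * frobNorm (A - Atil) := by
      rw [frobNorm_eq_sqrt_frobSq, div_eq_mul_one_div 2 α]
      gcongr
      linarith [Real.one_lt_sqrt_two]

/-- If `λ_k − λ_{k+1} ≥ α` and `λ_k ≥ α` then there is an orthogonal `Q ∈ ℝ^{k×k}`
such that every row satisfies `‖ṽ(i) − v(i)Q‖_2 ≤ (1+√2)(1/α)‖A − Ã‖_F`. -/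
theorem spectral_coordinates_perturbation_bound {N k : ℕ} (hk0 : 0 < k) (hkN : k < N)
    (A Atil U Util : Matrix (Fin N) (Fin N) ℝ)
    (lam tlam : Fin N → ℝ) (hlam : Antitone lam) (htlam : Antitone tlam)
    (hUorth : U * Uᵀ = 1) (hUtilorth : Util * Utilᵀ = 1)
    (hAdiag : A = U * Matrix.diagonal lam * Uᵀ)
    (hAtildiag : Atil = Util * Matrix.diagonal tlam * Utilᵀ)
    (Vk Vtilk : Matrix (Fin N) (Fin k) ℝ)
    (hVk : Vkᵀ * Vk = 1) (hVtilk : Vtilkᵀ * Vtilk = 1)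
    (hVkcols : ∀ j : Fin k,
      A.mulVec (fun i => Vk i j) = lam (Fin.castLE hkN.le j) • (fun i => Vk i j))
    (hVtilkcols : ∀ j : Fin k,
      Atil.mulVec (fun i => Vtilk i j) = tlam (Fin.castLE hkN.le j) • (fun i => Vtilk i j))
    (α : ℝ) (hα : 0 < α)
    (hgap : α ≤ lam ⟨k - 1, lt_of_le_of_lt (Nat.sub_le k 1) hkN⟩ - lam ⟨k, hkN⟩)
    (hlamk : α ≤ lam ⟨k - 1, lt_of_le_of_lt (Nat.sub_le k 1) hkN⟩) :
    ∃ Q : Matrix (Fin k) (Fin k) ℝ, Qᵀ * Q = 1 ∧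
      ∀ i : Fin N,
        eucNorm (fun j => Vtilk i j - Matrix.vecMul (fun l => Vk i l) Q j) ≤
          (1 + Real.sqrt 2) * (1 / α) * frobNorm (A - Atil) :=
  spectral_coordinates_perturbation_bound_general hkN A Atil U Util lam tlam hlam htlam hUorth
    hUtilorth hAdiag hAtildiag Vk Vtilk hVk hVtilk hVkcols hVtilkcols α hα hgap
end

section
/- Given points x_1,…,x_N in ℝ^n and σ > 0, let W_{ij} = exp(−‖x_i − x_j‖_2²/(2σ)), D_{ii} = Σ_{k=1}^N W_{ik}, A = D^{−1/2} W D^{−1/2}, and set c_{ij} = ‖x_i − x_j‖_2²/(2σ) and C = max_{i,j} c_{ij}. Let W̃ ∈ ℝ^{N×N} be any matrix satisfying W_{ij}·e^{−δ c_{ij}} ≤ W̃_{ij} ≤ W_{ij}·e^{δ c_{ij}} for all i,j, for some δ > 0, and define D̃_{ii} = Σ_{k=1}^N W̃_{ik} and à = D̃^{−1/2} W̃ D̃^{−1/2}. Then for all i,j, |Ã_{ij} − A_{ij}| ≤ e^{2δC} − 1. -/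
open Matrix

/-- Gaussian kernel matrix `W_{ij} = exp(−‖x_i − x_j‖²/(2σ))`. -/
noncomputable def gaussW {N n : ℕ} (x : Fin N → Fin n → ℝ) (σ : ℝ) :
    Matrix (Fin N) (Fin N) ℝ :=
  fun i j => Real.exp (-(eucNorm (x i - x j) ^ 2) / (2 * σ))

/-- Degree `D_{ii} = Σ_k W_{ik}` of row `i`. -/
noncomputable def degW {N : ℕ} (W : Matrix (Fin N) (Fin N) ℝ) (i : Fin N) : ℝ :=
  ∑ l, W i l

/-- Normalized affinity matrix `A = D^{−1/2} W D^{−1/2}`. -/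
noncomputable def normAff {N : ℕ} (W : Matrix (Fin N) (Fin N) ℝ) :
    Matrix (Fin N) (Fin N) ℝ :=
  fun i j => W i j / Real.sqrt (degW W i * degW W j)

lemma aux_sqrt_exp_mul (t m : ℝ) :
    Real.sqrt (Real.exp (t + t) * m) = Real.exp t * Real.sqrt m := by
  rw [Real.exp_add, Real.sqrt_mul (by positivity), Real.sqrt_mul_self (Real.exp_nonneg _)]

/-- If `W_{ij} e^{−δ c_{ij}} ≤ W̃_{ij} ≤ W_{ij} e^{δ c_{ij}}` with
`c_{ij} = ‖x_i − x_j‖²/(2σ)` and `C = max_{i,j} c_{ij}`, then the normalized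
affinity matrices satisfy `|Ã_{ij} − A_{ij}| ≤ e^{2δC} − 1`. -/
theorem affinity_entrywise_perturbation_of_kernel_sandwich {N n : ℕ} (hN : 0 < N)
    (x : Fin N → Fin n → ℝ) (σ δ : ℝ) (hσ : 0 < σ) (hδ : 0 < δ)
    (Wtil : Matrix (Fin N) (Fin N) ℝ)
    (hsand : ∀ i j,
      gaussW x σ i j * Real.exp (-(δ * (eucNorm (x i - x j) ^ 2 / (2 * σ)))) ≤ Wtil i j ∧
      Wtil i j ≤ gaussW x σ i j * Real.exp (δ * (eucNorm (x i - x j) ^ 2 / (2 * σ))))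
    (C : ℝ) (hC : C = ⨆ a : Fin N, ⨆ b : Fin N, eucNorm (x a - x b) ^ 2 / (2 * σ)) :
    ∀ i j, |normAff Wtil i j - normAff (gaussW x σ) i j| ≤ Real.exp (2 * δ * C) - 1 := by
  intro i j
  have hNe : Nonempty (Fin N) := Fin.pos_iff_nonempty.mp hN
  set c : Fin N → Fin N → ℝ := fun a b => eucNorm (x a - x b) ^ 2 / (2 * σ) with hcdef
  have hc_nonneg : ∀ a b, 0 ≤ c a b := fun a b =>
    div_nonneg (sq_nonneg _) (by positivity)
  have hCc : ∀ a b, c a b ≤ C := by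
    intro a b
    rw [hC]
    show c a b ≤ ⨆ a', ⨆ b', c a' b'
    have h1 : c a b ≤ ⨆ b', c a b' := le_ciSup (Set.finite_range _).bddAbove b
    have h2 : (⨆ b', c a b') ≤ ⨆ a', ⨆ b', c a' b' :=
      le_ciSup (f := fun a' => ⨆ b', c a' b') (Set.finite_range _).bddAbove a
    exact h1.trans h2
  have hC0 : 0 ≤ C := le_trans (hc_nonneg i j) (hCc i j)
  have hWpos : ∀ a b, 0 < gaussW x σ a b := fun a b => Real.exp_pos _
  -- symmetry of W
  have hWsymm : ∀ a b, gaussW x σ a b = gaussW x σ b a := by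
    intro a b
    unfold gaussW eucNorm
    have : ∑ k, (x a - x b) k ^ 2 = ∑ k, (x b - x a) k ^ 2 := by
      refine Finset.sum_congr rfl fun k _ => ?_
      simp only [Pi.sub_apply]; ring
    rw [this]
  -- sandwich with C
  have hupper : ∀ a b, Wtil a b ≤ Real.exp (δ * C) * gaussW x σ a b := by
    intro a b
    calc Wtil a b ≤ gaussW x σ a b * Real.exp (δ * c a b) := (hsand a b).2
      _ ≤ gaussW x σ a b * Real.exp (δ * C) :=
          mul_le_mul_of_nonneg_left
            (Real.exp_le_exp.mpr (mul_le_mul_of_nonneg_left (hCc a b) hδ.le)) (hWpos a b).le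
      _ = _ := mul_comm _ _
  have hlower : ∀ a b, Real.exp (-(δ * C)) * gaussW x σ a b ≤ Wtil a b := by
    intro a b
    calc Real.exp (-(δ * C)) * gaussW x σ a b
        = gaussW x σ a b * Real.exp (-(δ * C)) := mul_comm _ _
      _ ≤ gaussW x σ a b * Real.exp (-(δ * c a b)) :=
          mul_le_mul_of_nonneg_left
            (Real.exp_le_exp.mpr (neg_le_neg (mul_le_mul_of_nonneg_left (hCc a b) hδ.le)))
            (hWpos a b).le
      _ ≤ Wtil a b := (hsand a b).1
  -- degrees
  have hDpos : ∀ a, 0 < degW (gaussW x σ) a := fun a =>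
    Finset.sum_pos (fun l _ => hWpos a l) Finset.univ_nonempty
  have hDtil_le : ∀ a, degW Wtil a ≤ Real.exp (δ * C) * degW (gaussW x σ) a := by
    intro a
    unfold degW
    rw [Finset.mul_sum]
    exact Finset.sum_le_sum fun l _ => hupper a l
  have hDtil_ge : ∀ a, Real.exp (-(δ * C)) * degW (gaussW x σ) a ≤ degW Wtil a := by
    intro a
    unfold degW
    rw [Finset.mul_sum]
    exact Finset.sum_le_sum fun l _ => hlower a l
  have hDtilpos : ∀ a, 0 < degW Wtil a := fun a =>
    lt_of_lt_of_le (mul_pos (Real.exp_pos _) (hDpos a)) (hDtil_ge a)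
  -- sqrt bounds
  set s : ℝ := Real.sqrt (degW (gaussW x σ) i * degW (gaussW x σ) j) with hsdef
  set t : ℝ := Real.sqrt (degW Wtil i * degW Wtil j) with htdef
  have hs_pos : 0 < s := Real.sqrt_pos.mpr (mul_pos (hDpos i) (hDpos j))
  have ht_pos : 0 < t := Real.sqrt_pos.mpr (mul_pos (hDtilpos i) (hDtilpos j))
  have ht_le : t ≤ Real.exp (δ * C) * s := by
    rw [hsdef, htdef, ← aux_sqrt_exp_mul]
    apply Real.sqrt_le_sqrt
    rw [Real.exp_add]
    calc degW Wtil i * degW Wtil j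
        ≤ (Real.exp (δ * C) * degW (gaussW x σ) i) * (Real.exp (δ * C) * degW (gaussW x σ) j) :=
          mul_le_mul (hDtil_le i) (hDtil_le j) (hDtilpos j).le
            (mul_pos (Real.exp_pos _) (hDpos i)).le
      _ = Real.exp (δ * C) * Real.exp (δ * C) * (degW (gaussW x σ) i * degW (gaussW x σ) j) := by
          ring
  have ht_ge : Real.exp (-(δ * C)) * s ≤ t := by
    rw [hsdef, htdef, ← aux_sqrt_exp_mul]
    apply Real.sqrt_le_sqrt
    rw [Real.exp_add]
    calc Real.exp (-(δ * C)) * Real.exp (-(δ * C)) * (degW (gaussW x σ) i * degW (gaussW x σ) j)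
        = (Real.exp (-(δ * C)) * degW (gaussW x σ) i) * (Real.exp (-(δ * C)) * degW (gaussW x σ) j) := by
          ring
      _ ≤ degW Wtil i * degW Wtil j :=
          mul_le_mul (hDtil_ge i) (hDtil_ge j)
            (mul_pos (Real.exp_pos _) (hDpos j)).le (hDtilpos i).le
  -- A in [0,1]
  have hA_def : normAff (gaussW x σ) i j = gaussW x σ i j / s := rfl
  have hAt_def : normAff Wtil i j = Wtil i j / t := rfl
  have hA_nonneg : 0 ≤ normAff (gaussW x σ) i j := by
    rw [hA_def]; exact div_nonneg (hWpos i j).le hs_pos.le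
  have hA_le_one : normAff (gaussW x σ) i j ≤ 1 := by
    rw [hA_def, div_le_one hs_pos]
    have h1 : gaussW x σ i j ≤ degW (gaussW x σ) i :=
      Finset.single_le_sum (fun l _ => (hWpos i l).le) (Finset.mem_univ j)
    have h2 : gaussW x σ i j ≤ degW (gaussW x σ) j := by
      rw [hWsymm i j]
      exact Finset.single_le_sum (fun l _ => (hWpos j l).le) (Finset.mem_univ i)
    have hsq : gaussW x σ i j ^ 2 ≤ degW (gaussW x σ) i * degW (gaussW x σ) j := by
      have := mul_le_mul h1 h2 (hWpos i j).le (hDpos i).le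
      nlinarith [hWpos i j]
    have := Real.sqrt_le_sqrt hsq
    rwa [Real.sqrt_sq (hWpos i j).le] at this
  -- entrywise bounds on Ã
  have hAt_le : normAff Wtil i j ≤ Real.exp (2 * δ * C) * normAff (gaussW x σ) i j := by
    rw [hAt_def, hA_def]
    calc Wtil i j / t
        ≤ (Real.exp (δ * C) * gaussW x σ i j) / (Real.exp (-(δ * C)) * s) := by
          exact div_le_div₀ (mul_pos (Real.exp_pos _) (hWpos i j)).le (hupper i j)
            (mul_pos (Real.exp_pos _) hs_pos) ht_ge
      _ = (Real.exp (δ * C) / Real.exp (-(δ * C))) * (gaussW x σ i j / s) :=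
          mul_div_mul_comm _ _ _ _
      _ = Real.exp (2 * δ * C) * (gaussW x σ i j / s) := by
          rw [← Real.exp_sub]; ring_nf
  have hAt_ge : Real.exp (-(2 * δ * C)) * normAff (gaussW x σ) i j ≤ normAff Wtil i j := by
    rw [hAt_def, hA_def]
    calc Real.exp (-(2 * δ * C)) * (gaussW x σ i j / s)
        = (Real.exp (-(δ * C)) / Real.exp (δ * C)) * (gaussW x σ i j / s) := by
          rw [← Real.exp_sub]; ring_nf
      _ = (Real.exp (-(δ * C)) * gaussW x σ i j) / (Real.exp (δ * C) * s) :=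
          (mul_div_mul_comm _ _ _ _).symm
      _ ≤ Wtil i j / t := by
          exact div_le_div₀ ((mul_pos (Real.exp_pos _) (hWpos i j)).le.trans (hlower i j))
            (hlower i j) ht_pos ht_le
  -- conclude
  have hexp1 : (1 : ℝ) ≤ Real.exp (2 * δ * C) := by
    rw [show (1:ℝ) = Real.exp 0 by simp]
    exact Real.exp_le_exp.mpr (by positivity)
  have hexpsum : Real.exp (-(2 * δ * C)) + Real.exp (2 * δ * C) ≥ 2 := by
    nlinarith [Real.add_one_le_exp (2 * δ * C), Real.add_one_le_exp (-(2 * δ * C))]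
  rw [abs_le]
  constructor
  · nlinarith [hAt_ge, hA_le_one, hA_nonneg, Real.exp_pos (-(2 * δ * C))]
  · nlinarith [hAt_le, hA_le_one, hA_nonneg]
end

section
/- Given points x_1,…,x_N in ℝ^n (not all equal) and σ > 0, let W_{ij} = exp(−‖x_i − x_j‖_2²/(2σ)), D_{ii} = Σ_{k=1}^N W_{ik}, and A = D^{−1/2} W D^{−1/2}. Let Φ be an m×n real matrix, define W̃_{ij} = exp(−‖Φx_i − Φx_j‖_2²/(2σ)), D̃_{ii} = Σ_{k=1}^N W̃_{ik} and à = D̃^{−1/2} W̃ D̃^{−1/2}. Fix 0 < ε < 1, set C = max_{i,j} ‖x_i − x_j‖_2²/(2σ) and δ = ε/(4C). If (1 − δ)·‖x_i − x_j‖_2² ≤ ‖Φx_i − Φx_j‖_2² ≤ (1 + δ)·‖x_i − x_j‖_2² for all i,j (which holds in particular when each x_i is s-sparse and Φ satisfies the restricted isometry property of order 2s with constant δ), then |Ã_{ij} − A_{ij}| ≤ ε for all i,j. -/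
/-!
The distortion bound with `δ = ε / (4C)` moves every exponent `‖x_i − x_j‖² / (2σ)` by at most
`δ C = ε / 4`, so the kernel entries, and hence the degrees, change by a factor in
`[e^{−ε/4}, e^{ε/4}]`. The normalized affinities then change by a factor in `[e^{−ε/2}, e^{ε/2}]`,
and since `0 ≤ A_{ij} ≤ 1` (as `W_{ij} ≤ D_{ii}` and `W_{ij} = W_{ji} ≤ D_{jj}`) this
multiplicative error is at most `e^{ε/2} − 1 ≤ ε` in absolute terms.
-/

open Matrix

open Real

lemma Real.exp_half_sub_one_le {ε : ℝ} (h0 : 0 ≤ ε) (h1 : ε ≤ 1) : exp (ε / 2) - 1 ≤ ε := by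
  have hpos : 0 < 1 - ε / 2 := by linarith
  have hle : exp (ε / 2) ≤ 1 / (1 - ε / 2) :=
    exp_bound_div_one_sub_of_interval (by linarith) (by linarith)
  have : 1 / (1 - ε / 2) ≤ 1 + ε := by
    rw [div_le_iff₀ hpos]
    nlinarith
  linarith

lemma abs_sub_le_of_le_exp_mul {a b s : ℝ} (ha : 0 ≤ a) (hba : b ≤ exp s * a)
    (hab : a ≤ exp s * b) : |b - a| ≤ (exp s - 1) * a := by
  have hs := exp_pos s
  rw [abs_le]
  constructor
  · -- `exp s * (b - (2 - exp s) * a) ≥ a * (exp s - 1) ^ 2 ≥ 0`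
    nlinarith [mul_nonneg ha (sq_nonneg (exp s - 1))]
  · linarith

lemma le_ciSup₂_of_finite {ι κ : Type*} [Finite ι] [Finite κ] (f : ι → κ → ℝ) (i : ι) (j : κ) :
    f i j ≤ ⨆ i, ⨆ j, f i j :=
  le_ciSup₂ ((Set.finite_iUnion fun i => Set.finite_range (f i)).bddAbove) i j

lemma eucNorm_sq_pos {d : ℕ} {v : Fin d → ℝ} (hv : v ≠ 0) : 0 < eucNorm v ^ 2 := by
  obtain ⟨k, hk⟩ := Function.ne_iff.mp hv
  have hs : 0 < ∑ j, v j ^ 2 :=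
    Finset.sum_pos' (fun j _ => sq_nonneg _) ⟨k, Finset.mem_univ k, sq_pos_of_ne_zero hk⟩
  exact pow_pos (Real.sqrt_pos.mpr hs) 2

lemma eucNorm_sub_comm {d : ℕ} (u v : Fin d → ℝ) : eucNorm (u - v) = eucNorm (v - u) := by
  unfold eucNorm
  congr 1
  exact Finset.sum_congr rfl fun k _ => by simp only [Pi.sub_apply]; ring

section NormAff

variable {N : ℕ} {W W' : Matrix (Fin N) (Fin N) ℝ} {t : ℝ}

lemma degW_pos (hW : ∀ a b, 0 < W a b) (i : Fin N) : 0 < degW W i :=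
  Finset.sum_pos (fun l _ => hW i l) ⟨i, Finset.mem_univ i⟩

lemma degW_le_exp_mul (h : ∀ a b, W a b ≤ exp t * W' a b) (i : Fin N) :
    degW W i ≤ exp t * degW W' i := by
  rw [degW, degW, Finset.mul_sum]
  exact Finset.sum_le_sum fun l _ => h i l

lemma sqrt_degW_mul_le_exp_mul (hW : ∀ a b, 0 ≤ W a b) (h : ∀ a b, W a b ≤ exp t * W' a b)
    (i j : Fin N) :
    √(degW W i * degW W j) ≤ exp t * √(degW W' i * degW W' j) := by
  have hD : ∀ k, 0 ≤ degW W k := fun k => Finset.sum_nonneg fun l _ => hW k l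
  calc √(degW W i * degW W j)
      ≤ √((exp t * degW W' i) * (exp t * degW W' j)) :=
        Real.sqrt_le_sqrt (mul_le_mul (degW_le_exp_mul h i) (degW_le_exp_mul h j) (hD j)
          ((hD i).trans (degW_le_exp_mul h i)))
    _ = √(exp t * exp t) * √(degW W' i * degW W' j) := by
        rw [← Real.sqrt_mul (mul_self_nonneg _)]
        ring_nf
    _ = exp t * √(degW W' i * degW W' j) := by rw [Real.sqrt_mul_self (exp_pos t).le]

lemma normAff_nonneg (hW : ∀ a b, 0 ≤ W a b) (i j : Fin N) : 0 ≤ normAff W i j :=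
  div_nonneg (hW i j) (Real.sqrt_nonneg _)

lemma normAff_le_one (hW : ∀ a b, 0 ≤ W a b) (hsymm : ∀ a b, W a b = W b a) (i j : Fin N) :
    normAff W i j ≤ 1 := by
  have hi : W i j ≤ degW W i := Finset.single_le_sum (fun l _ => hW i l) (Finset.mem_univ j)
  have hj : W i j ≤ degW W j :=
    hsymm i j ▸ Finset.single_le_sum (fun l _ => hW j l) (Finset.mem_univ i)
  refine div_le_one_of_le₀ ?_ (Real.sqrt_nonneg _)
  calc W i j = √(W i j * W i j) := (Real.sqrt_mul_self (hW i j)).symm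
    _ ≤ √(degW W i * degW W j) := Real.sqrt_le_sqrt (mul_le_mul hi hj (hW i j) ((hW i j).trans hi))

lemma normAff_le_exp_mul (hW : ∀ a b, 0 < W a b) (h' : ∀ a b, W' a b ≤ exp t * W a b)
    (h : ∀ a b, W a b ≤ exp t * W' a b) (i j : Fin N) :
    normAff W' i j ≤ exp (2 * t) * normAff W i j := by
  have hS : 0 < √(degW W i * degW W j) :=
    Real.sqrt_pos.mpr (mul_pos (degW_pos hW i) (degW_pos hW j))
  have hS' := sqrt_degW_mul_le_exp_mul (fun a b => (hW a b).le) h i j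
  calc normAff W' i j ≤ exp t * W i j / √(degW W' i * degW W' j) :=
        div_le_div_of_nonneg_right (h' i j) (Real.sqrt_nonneg _)
    _ ≤ exp t * W i j / (exp (-t) * √(degW W i * degW W j)) := by
        refine div_le_div_of_nonneg_left (mul_pos (exp_pos t) (hW i j)).le
          (mul_pos (exp_pos _) hS) ?_
        rwa [Real.exp_neg, inv_mul_le_iff₀ (exp_pos t)]
    _ = exp (2 * t) * normAff W i j := by
        rw [normAff, Real.exp_neg, two_mul, Real.exp_add]
        field_simp

end NormAff

section GaussW

variable {N n : ℕ}

lemma gaussW_pos (x : Fin N → Fin n → ℝ) (σ : ℝ) (a b : Fin N) : 0 < gaussW x σ a b :=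
  exp_pos _

lemma gaussW_comm (x : Fin N → Fin n → ℝ) (σ : ℝ) (a b : Fin N) :
    gaussW x σ a b = gaussW x σ b a := by
  rw [gaussW, gaussW, eucNorm_sub_comm]

lemma abs_eucNorm_sq_sub_div_le {m : ℕ} {x : Fin N → Fin n → ℝ} {y : Fin N → Fin m → ℝ}
    {σ C δ : ℝ} (hσ : 0 < σ) (hδ : 0 ≤ δ) (hC : ∀ a b, eucNorm (x a - x b) ^ 2 / (2 * σ) ≤ C)
    (hxy : ∀ a b, (1 - δ) * eucNorm (x a - x b) ^ 2 ≤ eucNorm (y a - y b) ^ 2 ∧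
      eucNorm (y a - y b) ^ 2 ≤ (1 + δ) * eucNorm (x a - x b) ^ 2) (a b : Fin N) :
    |eucNorm (y a - y b) ^ 2 - eucNorm (x a - x b) ^ 2| / (2 * σ) ≤ δ * C :=
  calc _ ≤ δ * eucNorm (x a - x b) ^ 2 / (2 * σ) := by
        gcongr
        exact abs_sub_le_iff.mpr ⟨by linarith [hxy a b], by linarith [hxy a b]⟩
    _ = δ * (eucNorm (x a - x b) ^ 2 / (2 * σ)) := mul_div_assoc _ _ _
    _ ≤ δ * C := mul_le_mul_of_nonneg_left (hC a b) hδ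

lemma gaussW_le_exp_mul {n' : ℕ} {σ t : ℝ} {y : Fin N → Fin n → ℝ} {z : Fin N → Fin n' → ℝ}
    (hσ : 0 < σ) (h : ∀ a b, |eucNorm (y a - y b) ^ 2 - eucNorm (z a - z b) ^ 2| / (2 * σ) ≤ t)
    (a b : Fin N) : gaussW z σ a b ≤ exp t * gaussW y σ a b := by
  have := (div_le_div_of_nonneg_right (le_abs_self _) (by positivity)).trans (h a b)
  rw [gaussW, gaussW, ← exp_add, exp_le_exp, neg_div, neg_div]
  rw [sub_div] at this
  linarith

end GaussW

/-- If the compressed distances satisfy the RIP-type sandwich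
`(1−δ)‖x_i−x_j‖² ≤ ‖Φx_i−Φx_j‖² ≤ (1+δ)‖x_i−x_j‖²` with
`δ = ε/(4C)`, `C = max_{i,j} ‖x_i−x_j‖²/(2σ)`, then the normalized affinity
matrices built from the original and the compressed points satisfy
`|Ã_{ij} − A_{ij}| ≤ ε`. -/
theorem affinity_entrywise_perturbation_compressed_sensing {N n m : ℕ}
    (x : Fin N → Fin n → ℝ) (Φ : Matrix (Fin m) (Fin n) ℝ) (σ ε : ℝ)
    (hσ : 0 < σ) (hε0 : 0 < ε) (hε1 : ε < 1)
    (hx : ∃ i j, x i ≠ x j)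
    (C δ : ℝ)
    (hC : C = ⨆ a : Fin N, ⨆ b : Fin N, eucNorm (x a - x b) ^ 2 / (2 * σ))
    (hδ : δ = ε / (4 * C))
    (hRIP : ∀ i j,
      (1 - δ) * eucNorm (x i - x j) ^ 2 ≤ eucNorm (Φ.mulVec (x i) - Φ.mulVec (x j)) ^ 2 ∧
      eucNorm (Φ.mulVec (x i) - Φ.mulVec (x j)) ^ 2 ≤ (1 + δ) * eucNorm (x i - x j) ^ 2) :
    ∀ i j,
      |normAff (gaussW (fun a => Φ.mulVec (x a)) σ) i j - normAff (gaussW x σ) i j| ≤ ε := by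
  set y : Fin N → Fin m → ℝ := fun a => Φ.mulVec (x a)
  have hCle : ∀ a b, eucNorm (x a - x b) ^ 2 / (2 * σ) ≤ C := fun a b =>
    hC ▸ le_ciSup₂_of_finite (fun a b => eucNorm (x a - x b) ^ 2 / (2 * σ)) a b
  obtain ⟨a₀, b₀, hab⟩ := hx
  have hCpos : 0 < C :=
    (div_pos (eucNorm_sq_pos (sub_ne_zero.mpr hab)) (by positivity)).trans_le (hCle a₀ b₀)
  have hdist : ∀ a b,
      |eucNorm (y a - y b) ^ 2 - eucNorm (x a - x b) ^ 2| / (2 * σ) ≤ ε / 4 := fun a b =>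
    (abs_eucNorm_sq_sub_div_le hσ (hδ ▸ by positivity) hCle hRIP a b).trans_eq
      (by rw [hδ]; field_simp)
  have hxy := gaussW_le_exp_mul hσ hdist
  have hyx := gaussW_le_exp_mul (t := ε / 4) hσ fun a b => by
    rw [abs_sub_comm]
    exact hdist a b
  intro i j
  have hexp : 2 * (ε / 4) = ε / 2 := by ring
  have hup := hexp ▸ normAff_le_exp_mul (gaussW_pos x σ) hyx hxy i j
  have hlo := hexp ▸ normAff_le_exp_mul (gaussW_pos y σ) hxy hyx i j
  have hW : ∀ a b, 0 ≤ gaussW x σ a b := fun a b => (gaussW_pos x σ a b).le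
  calc _ ≤ (exp (ε / 2) - 1) * normAff (gaussW x σ) i j :=
        abs_sub_le_of_le_exp_mul (normAff_nonneg hW i j) hup hlo
    _ ≤ ε * 1 := mul_le_mul (exp_half_sub_one_le hε0.le hε1.le)
        (normAff_le_one hW (gaussW_comm x σ) i j) (normAff_nonneg hW i j) hε0.le
    _ = ε := mul_one ε
end
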